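/- arXiv:1112.6156 — 3 statements merged into one kernel-verified Lean document; each statement's English description precedes it below -/
import Mathlib

section
/- Let n ≥ 2 and let A : ℝⁿ \ {0} → ℂ be a smooth function which is positively homogeneous of degree 1−n. Then for every ℓ ∈ {1, …, n}, the integral over the unit sphere of the ℓ-th partial derivative of A vanishes: ∫_{S^{n−1}} (∂_{ξ_ℓ} A)(ξ) dΩ(ξ) = 0, where dΩ is the surface measure on the unit sphere S^{n−1} ⊂ ℝⁿ. -/
/-!
Multiply `f` by a radial cutoff `φ (‖x‖ ^ 2)` supported in an annulus; the integral over the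
whole space of its derivative in the direction `v` vanishes. By the product rule and polar
coordinates, homogeneity of degree `1 - n` turns the term `∂ᵥ(φ (‖x‖ ^ 2)) • f` into
`(∫₀^∞ (d/dr) φ (r ^ 2) dr) • ∫_S ⟪ω, v⟫ • f ω = 0`, while `φ (‖x‖ ^ 2) • ∂ᵥ f`, whose second factor
is homogeneous of degree `-n`, becomes `(∫₀^∞ φ (r ^ 2) / r dr) • ∫_S ∂ᵥ f`. A cutoff for which the
radial factor is positive finishes the proof.
-/

open MeasureTheory Real Set Metric Module Filter Topology

def IsPosHomogeneous {E F : Type*} [AddCommGroup E] [Module ℝ E] [AddCommGroup F] [Module ℝ F]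
    (d : ℤ) (f : E → F) : Prop :=
  ∀ t : ℝ, 0 < t → ∀ x : E, x ≠ 0 → f (t • x) = (t ^ d : ℝ) • f x

theorem IsPosHomogeneous.fderiv {E F : Type*} [NormedAddCommGroup E] [NormedSpace ℝ E]
    [NormedAddCommGroup F] [NormedSpace ℝ F] {d : ℤ} {f : E → F} (hf : IsPosHomogeneous d f)
    (hdiff : ∀ x : E, x ≠ 0 → DifferentiableAt ℝ f x) : IsPosHomogeneous (d - 1) (fderiv ℝ f) := by
  intro t ht x hx
  have hlocal : (fun y => f (t • y)) =ᶠ[𝓝 x] fun y => (t ^ d : ℝ) • f y :=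
    eventually_of_mem (isOpen_ne.mem_nhds hx) fun y hy => hf t ht y hy
  have hchain := hlocal.fderiv_eq (𝕜 := ℝ)
  rw [fderiv_comp_smul, fderiv_fun_const_smul (hdiff x hx)] at hchain
  rw [zpow_sub_one₀ ht.ne', mul_comm, mul_smul, ← hchain, smul_smul, inv_mul_cancel₀ ht.ne',
    one_smul]

section Cutoff

variable {E F : Type*} [NormedAddCommGroup E] [NormedAddCommGroup F] [NormedSpace ℝ F]
  {ψ : ℝ → ℝ} {h : E → F}

theorem eventually_comp_normSq_eq_zero (hψ : ψ =ᶠ[𝓝 0] 0) :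
    ∀ᶠ x in 𝓝 (0 : E), ψ (‖x‖ ^ 2) = 0 := by
  have : Tendsto (fun x : E => ‖x‖ ^ 2) (𝓝 0) (𝓝 0) :=
    (by fun_prop : Continuous fun x : E => ‖x‖ ^ 2).tendsto' 0 0 (by simp)
  exact this.eventually hψ

theorem continuous_comp_normSq_smul (hψ : Continuous ψ) (hψ0 : ψ =ᶠ[𝓝 0] 0)
    (hh : ContinuousOn h {0}ᶜ) : Continuous fun x => ψ (‖x‖ ^ 2) • h x := by
  refine continuous_iff_continuousAt.2 fun x => ?_
  rcases eq_or_ne x 0 with rfl | hx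
  · refine EventuallyEq.continuousAt (y := 0) ?_
    filter_upwards [eventually_comp_normSq_eq_zero hψ0] with y hy
    rw [hy, zero_smul]
  · exact ((hψ.comp (continuous_norm.pow 2)).continuousAt).smul
      (hh.continuousAt (isOpen_compl_singleton.mem_nhds hx))

theorem HasCompactSupport.comp_normSq [ProperSpace E] (hψ : HasCompactSupport ψ) :
    HasCompactSupport fun x : E => ψ (‖x‖ ^ 2) := by
  rw [hasCompactSupport_iff_eventuallyEq, coclosedCompact_eq_cocompact] at hψ ⊢
  exact hψ.comp_tendsto (((tendsto_pow_atTop two_ne_zero).comp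
    tendsto_norm_cocompact_atTop).mono_right atTop_le_cocompact)

theorem integrable_comp_normSq_smul [ProperSpace E] [MeasurableSpace E] [OpensMeasurableSpace E]
    (μ : Measure E) [IsFiniteMeasureOnCompacts μ] (hψ : Continuous ψ) (hψc : HasCompactSupport ψ)
    (hψ0 : ψ =ᶠ[𝓝 0] 0) (hh : ContinuousOn h {0}ᶜ) :
    Integrable (fun x => ψ (‖x‖ ^ 2) • h x) μ :=
  (continuous_comp_normSq_smul hψ hψ0 hh).integrable_of_hasCompactSupport hψc.comp_normSq.smul_right

end Cutoff

section LineDeriv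

variable {E F : Type*} [NormedAddCommGroup E] [InnerProductSpace ℝ E] [NormedAddCommGroup F]
  [NormedSpace ℝ F]

theorem hasLineDerivAt_comp_normSq_smul {φ : ℝ → ℝ} {h : E → F} {x : E}
    (hφ : DifferentiableAt ℝ φ (‖x‖ ^ 2)) (hh : DifferentiableAt ℝ h x) (v : E) :
    HasLineDerivAt ℝ (fun y => φ (‖y‖ ^ 2) • h y)
      (φ (‖x‖ ^ 2) • fderiv ℝ h x v + deriv φ (‖x‖ ^ 2) • ((2 * inner ℝ x v) • h x)) x v := by
  convert ((hφ.hasDerivAt.comp_hasFDerivAt x (hasFDerivAt_id x).norm_sq).smul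
    hh.hasFDerivAt).hasLineDerivAt v using 1
  · rfl
  · simp [smul_smul]

theorem integral_eq_zero_of_hasLineDerivAt [FiniteDimensional ℝ E] [MeasurableSpace E]
    [BorelSpace E] (μ : Measure E) [μ.IsAddHaarMeasure] {g g' : E → F} {v : E}
    (hg' : Integrable g' μ) (hg : Integrable g μ) (hd : ∀ x, HasLineDerivAt ℝ g (g' x) x v) :
    ∫ x, g' x ∂μ = 0 := by
  have := integral_bilinear_hasLineDerivAt_right_eq_neg_left_of_integrable (μ := μ)
    (B := (ContinuousLinearMap.lsmul ℝ ℝ).flip) (g := fun _ => (1 : ℝ)) (g' := fun _ => 0)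
    (by simpa using hg') (by simp) (by simpa using hg) (fun x _ => hd x)
    (fun _ _ => hasDerivAt_const _ _)
  simpa using this.symm

end LineDeriv

theorem pow_sub_one_mul_zpow_one_sub {r : ℝ} (hr : r ≠ 0) {n : ℕ} (hn : 1 ≤ n) :
    r ^ (n - 1) * r ^ ((1 : ℤ) - n) = 1 := by
  rw [← zpow_natCast, ← zpow_add₀ hr, Nat.cast_sub hn]
  simp

theorem integral_Ioi_deriv_comp_sq_mul_eq_zero {φ : ℝ → ℝ} (hφ : ContDiff ℝ 1 φ)
    (hφc : HasCompactSupport φ) (hφ0 : φ 0 = 0) :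
    ∫ r in Ioi (0 : ℝ), deriv φ (r ^ 2) * (2 * r) = 0 := by
  have hderiv (r : ℝ) : deriv (fun r : ℝ => φ (r ^ 2)) r = deriv φ (r ^ 2) * (2 * r) := by
    simpa [Function.comp_def] using
      ((hφ.differentiable one_ne_zero _).hasDerivAt.comp r (hasDerivAt_pow 2 r)).deriv
  have hsupp : HasCompactSupport fun r : ℝ => φ (r ^ 2) := by
    simpa using hφc.comp_normSq (E := ℝ)
  have hcomp : ContDiff ℝ 1 fun r : ℝ => φ (r ^ 2) := hφ.comp (contDiff_fun_id.pow 2)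
  simp_rw [← hderiv]
  rw [hsupp.integral_Ioi_deriv_eq hcomp 0]
  simp [hφ0]

theorem integral_Ioi_comp_sq_div_pos {φ : ℝ → ℝ} (hφ : Continuous φ) (hφc : HasCompactSupport φ)
    (hφ0 : φ =ᶠ[𝓝 0] 0) (hφ_nonneg : ∀ s, 0 ≤ φ s) {s₀ : ℝ} (hs₀ : 0 < s₀) (hφs₀ : 0 < φ s₀) :
    0 < ∫ r in Ioi (0 : ℝ), φ (r ^ 2) / r := by
  have hk : (fun r : ℝ => φ (r ^ 2) / r) = fun r => φ (‖r‖ ^ 2) • r⁻¹ := by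
    ext r
    simp [div_eq_mul_inv]
  have hcont : Continuous fun r : ℝ => φ (r ^ 2) / r :=
    hk ▸ continuous_comp_normSq_smul hφ hφ0 continuousOn_inv₀
  have hint : Integrable fun r : ℝ => φ (r ^ 2) / r :=
    hk ▸ integrable_comp_normSq_smul volume hφ hφc hφ0 continuousOn_inv₀
  rw [setIntegral_pos_iff_support_of_nonneg_ae ?_ hint.integrableOn]
  · refine (hcont.isOpen_support.inter isOpen_Ioi).measure_pos volume ⟨√s₀, ?_, sqrt_pos.2 hs₀⟩
    simp [sq_sqrt hs₀.le, hφs₀.ne', (sqrt_pos.2 hs₀).ne']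
  · filter_upwards [ae_restrict_mem measurableSet_Ioi] with r hr
    exact div_nonneg (hφ_nonneg _) (le_of_lt hr)

theorem exists_cutoff_integral_Ioi_comp_sq_div_pos :
    ∃ φ : ℝ → ℝ, ContDiff ℝ 1 φ ∧ HasCompactSupport φ ∧ φ =ᶠ[𝓝 0] 0 ∧
      0 < ∫ r in Ioi (0 : ℝ), φ (r ^ 2) / r := by
  let b : ContDiffBump (2 : ℝ) := ⟨1 / 2, 1, by norm_num, by norm_num⟩
  have hb0 : (b : ℝ → ℝ) =ᶠ[𝓝 0] 0 := by
    filter_upwards [Iio_mem_nhds one_pos] with s hs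
    refine b.zero_of_le_dist ?_
    rw [Real.dist_eq, abs_sub_comm, abs_of_pos (by linarith [mem_Iio.1 hs])]
    show (1 : ℝ) ≤ 2 - s
    linarith [mem_Iio.1 hs]
  exact ⟨b, b.contDiff, b.hasCompactSupport, hb0,
    integral_Ioi_comp_sq_div_pos b.continuous b.hasCompactSupport hb0 (fun _ => b.nonneg) two_pos
      (b.pos_of_mem_ball (mem_ball_self b.rOut_pos))⟩

theorem norm_smul_coe_sphere {E : Type*} [NormedAddCommGroup E] [NormedSpace ℝ E] {r : ℝ}
    (hr : 0 ≤ r) (ω : sphere (0 : E) 1) : ‖r • (ω : E)‖ = r := by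
  rw [norm_smul_of_nonneg hr, norm_eq_of_mem_sphere ω, mul_one]

section Polar

variable {E F : Type*} [NormedAddCommGroup E] [NormedSpace ℝ E] [FiniteDimensional ℝ E]
  [MeasurableSpace E] [BorelSpace E] [Nontrivial E] [NormedAddCommGroup F] [NormedSpace ℝ F]
  (μ : Measure E) [μ.IsAddHaarMeasure]

theorem integral_eq_integral_Ioi_smul_integral_sphere {f : E → F} {u : ℝ → ℝ}
    {w : sphere (0 : E) 1 → F}
    (hf : ∀ r : ℝ, 0 < r → ∀ ω : sphere (0 : E) 1, f (r • (ω : E)) = u r • w ω) :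
    ∫ x, f x ∂μ = (∫ r in Ioi (0 : ℝ), r ^ (finrank ℝ E - 1) * u r) • ∫ ω, w ω ∂μ.toSphere := by
  have hradial : ∫ r : Ioi (0 : ℝ), u r ∂(Measure.volumeIoiPow (finrank ℝ E - 1)) =
      ∫ r in Ioi (0 : ℝ), r ^ (finrank ℝ E - 1) * u r := by
    rw [Measure.volumeIoiPow, integral_withDensity_eq_integral_toReal_smul
      (measurable_subtype_coe.pow_const _).ennreal_ofReal
      (Eventually.of_forall fun _ => ENNReal.ofReal_lt_top),
      ← integral_subtype_comap measurableSet_Ioi]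
    refine integral_congr_ae (Eventually.of_forall fun r => ?_)
    simp [ENNReal.toReal_ofReal (pow_nonneg (le_of_lt r.2) _)]
  calc ∫ x, f x ∂μ = ∫ x : ({0}ᶜ : Set E), f x ∂μ.comap (↑) := by
        rw [integral_subtype_comap (measurableSet_singleton _).compl, restrict_compl_singleton]
    _ = ∫ p : sphere (0 : E) 1 × Ioi (0 : ℝ), u p.2 • w p.1
          ∂μ.toSphere.prod (.volumeIoiPow (finrank ℝ E - 1)) := by
        rw [← (μ.measurePreserving_homeomorphUnitSphereProd).integral_comp
          (Homeomorph.measurableEmbedding _)]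
        refine integral_congr_ae (Eventually.of_forall fun x => ?_)
        dsimp only
        rw [← hf _ (homeomorphUnitSphereProd E x).2.2]
        simp [smul_smul, mul_inv_cancel₀ (norm_ne_zero_iff.2 x.2)]
    _ = _ := by
        rw [← integral_prod_swap]
        simp only [Prod.fst_swap, Prod.snd_swap]
        rw [integral_prod_smul (fun r : Ioi (0 : ℝ) => u r) w, hradial]

theorem integral_comp_normSq_smul_fderiv {f : E → F} (hhom : IsPosHomogeneous (1 - finrank ℝ E) f)
    (hdiff : ∀ x : E, x ≠ 0 → DifferentiableAt ℝ f x) (φ : ℝ → ℝ) (v : E) :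
    ∫ x, φ (‖x‖ ^ 2) • fderiv ℝ f x v ∂μ =
      (∫ r in Ioi (0 : ℝ), φ (r ^ 2) / r) • ∫ ω, fderiv ℝ f ω v ∂μ.toSphere := by
  rw [integral_eq_integral_Ioi_smul_integral_sphere μ
    (u := fun r => φ (r ^ 2) * r ^ ((1 - finrank ℝ E : ℤ) - 1)) (w := fun ω => fderiv ℝ f ω v)]
  · refine congrArg (· • _) (setIntegral_congr_fun measurableSet_Ioi fun r (hr : 0 < r) => ?_)
    rw [zpow_sub_one₀ hr.ne', div_eq_mul_inv]
    linear_combination (φ (r ^ 2) * r⁻¹) *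
      pow_sub_one_mul_zpow_one_sub hr.ne' (finrank_pos (R := ℝ) (M := E))
  · intro r hr ω
    simp only [norm_smul_coe_sphere hr.le,
      hhom.fderiv hdiff r hr ω (ne_zero_of_mem_unit_sphere ω), smul_apply, smul_smul]

end Polar

section Sphere

variable {E F : Type*} [NormedAddCommGroup E] [InnerProductSpace ℝ E] [FiniteDimensional ℝ E]
  [MeasurableSpace E] [BorelSpace E] [Nontrivial E] [NormedAddCommGroup F] [NormedSpace ℝ F]
  (μ : Measure E) [μ.IsAddHaarMeasure] {f : E → F}

theorem integral_deriv_comp_normSq_smul_eq_zero (hhom : IsPosHomogeneous (1 - finrank ℝ E) f)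
    {φ : ℝ → ℝ} (hφ : ContDiff ℝ 1 φ) (hφc : HasCompactSupport φ) (hφ0 : φ 0 = 0) (v : E) :
    ∫ x, deriv φ (‖x‖ ^ 2) • ((2 * inner ℝ x v) • f x) ∂μ = 0 := by
  rw [integral_eq_integral_Ioi_smul_integral_sphere μ
    (u := fun r => deriv φ (r ^ 2) * (2 * r) * r ^ (1 - finrank ℝ E : ℤ))
    (w := fun ω => inner ℝ (ω : E) v • f ω)]
  · rw [setIntegral_congr_fun measurableSet_Ioi (g := fun r => deriv φ (r ^ 2) * (2 * r)),
      integral_Ioi_deriv_comp_sq_mul_eq_zero hφ hφc hφ0, zero_smul]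
    intro r (hr : 0 < r)
    linear_combination (deriv φ (r ^ 2) * (2 * r)) *
      pow_sub_one_mul_zpow_one_sub hr.ne' (finrank_pos (R := ℝ) (M := E))
  · intro r hr ω
    simp only [norm_smul_coe_sphere hr.le, real_inner_smul_left,
      hhom r hr ω (ne_zero_of_mem_unit_sphere ω), smul_smul]
    congr 1
    ring

theorem integral_Ioi_smul_integral_sphere_fderiv_eq_zero (hf : ContDiffOn ℝ 1 f {0}ᶜ)
    (hhom : IsPosHomogeneous (1 - finrank ℝ E) f) {φ : ℝ → ℝ} (hφ : ContDiff ℝ 1 φ)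
    (hφc : HasCompactSupport φ) (hφ0 : φ =ᶠ[𝓝 0] 0) (v : E) :
    (∫ r in Ioi (0 : ℝ), φ (r ^ 2) / r) • ∫ ω, fderiv ℝ f ω v ∂μ.toSphere = 0 := by
  have hdiff (x : E) (hx : x ≠ 0) : DifferentiableAt ℝ f x :=
    (hf.differentiableOn one_ne_zero).differentiableAt (isOpen_compl_singleton.mem_nhds hx)
  set G₁ := fun x => φ (‖x‖ ^ 2) • fderiv ℝ f x v
  set G₂ := fun x => deriv φ (‖x‖ ^ 2) • ((2 * inner ℝ x v) • f x)
  have hG₁ : Integrable G₁ μ := integrable_comp_normSq_smul μ hφ.continuous hφc hφ0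
    ((hf.continuousOn_fderiv_of_isOpen isOpen_compl_singleton le_rfl).clm_apply continuousOn_const)
  have hG₂ : Integrable G₂ μ := integrable_comp_normSq_smul μ (hφ.continuous_deriv le_rfl)
    hφc.deriv (by simpa using hφ0.deriv)
    ((continuous_const.mul (continuous_id.inner continuous_const)).continuousOn.smul
      hf.continuousOn)
  have hline (x : E) : HasLineDerivAt ℝ (fun y => φ (‖y‖ ^ 2) • f y) (G₁ x + G₂ x) x v := by
    rcases eq_or_ne x 0 with rfl | hx
    · have hg0 : (fun y => φ (‖y‖ ^ 2) • f y) =ᶠ[𝓝 0] fun _ => 0 := by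
        filter_upwards [eventually_comp_normSq_eq_zero hφ0] with y hy
        rw [hy, zero_smul]
      have hG0 : G₁ 0 + G₂ 0 = 0 := by simp [G₁, G₂, hφ0.self_of_nhds]
      simpa [hG0] using
        ((hasFDerivAt_const (0 : F) (0 : E)).congr_of_eventuallyEq hg0).hasLineDerivAt v
    · exact hasLineDerivAt_comp_normSq_smul (hφ.differentiable one_ne_zero _) (hdiff x hx) v
  have hIBP : ∫ x, G₁ x + G₂ x ∂μ = 0 := integral_eq_zero_of_hasLineDerivAt μ (hG₁.add hG₂)
    (integrable_comp_normSq_smul μ hφ.continuous hφc hφ0 hf.continuousOn) hline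
  rwa [integral_add hG₁ hG₂, integral_deriv_comp_normSq_smul_eq_zero μ hhom hφ hφc
    hφ0.self_of_nhds, add_zero, integral_comp_normSq_smul_fderiv μ hhom hdiff] at hIBP

theorem integral_sphere_fderiv_eq_zero_of_isPosHomogeneous
    (hhom : IsPosHomogeneous (1 - finrank ℝ E) f) (hf : ContDiffOn ℝ 1 f {0}ᶜ) (v : E) :
    ∫ ω, fderiv ℝ f ω v ∂μ.toSphere = 0 := by
  obtain ⟨φ, hφ, hφc, hφ0, hpos⟩ := exists_cutoff_integral_Ioi_comp_sq_div_pos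
  exact (smul_eq_zero.1 (integral_Ioi_smul_integral_sphere_fderiv_eq_zero μ hf hhom hφ hφc hφ0
    v)).resolve_left hpos.ne'

end Sphere

theorem sphere_integral_of_partial_deriv_of_homogeneous_eq_zero_general
    (n : ℕ) (A : EuclideanSpace ℝ (Fin n) → ℂ)
    (hA_smooth : ContDiffOn ℝ (⊤ : ℕ∞) A {ξ : EuclideanSpace ℝ (Fin n) | ξ ≠ 0})
    (hA_homog : ∀ (t : ℝ), 0 < t → ∀ (ξ : EuclideanSpace ℝ (Fin n)), ξ ≠ 0 →
      A (t • ξ) = (t : ℂ) ^ ((1 : ℤ) - n) * A ξ)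
    (ℓ : Fin n) :
    ∫ ω : Metric.sphere (0 : EuclideanSpace ℝ (Fin n)) 1,
        fderiv ℝ A (ω : EuclideanSpace ℝ (Fin n)) (EuclideanSpace.single ℓ 1)
      ∂((volume : Measure (EuclideanSpace ℝ (Fin n))).toSphere) = 0 := by
  have : Nonempty (Fin n) := ⟨ℓ⟩
  refine integral_sphere_fderiv_eq_zero_of_isPosHomogeneous volume ?_
    (hA_smooth.of_le (by exact_mod_cast le_top)) _
  intro t ht ξ hξ
  rw [finrank_euclideanSpace_fin, hA_homog t ht ξ hξ, Complex.real_smul, Complex.ofReal_zpow]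

/-- Let `n ≥ 2` and let `A : ℝⁿ \ {0} → ℂ` be a smooth function which is
positively homogeneous of degree `1 − n`. Then for every `ℓ ∈ {1, …, n}`, the integral
over the unit sphere of the `ℓ`-th partial derivative of `A` vanishes:
`∫_{S^{n−1}} (∂_{ξ_ℓ} A)(ξ) dΩ(ξ) = 0`. -/
theorem sphere_integral_of_partial_deriv_of_homogeneous_eq_zero
    (n : ℕ) (hn : 2 ≤ n) (A : EuclideanSpace ℝ (Fin n) → ℂ)
    (hA_smooth : ContDiffOn ℝ (⊤ : ℕ∞) A {ξ : EuclideanSpace ℝ (Fin n) | ξ ≠ 0})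
    (hA_homog : ∀ (t : ℝ), 0 < t → ∀ (ξ : EuclideanSpace ℝ (Fin n)), ξ ≠ 0 →
      A (t • ξ) = (t : ℂ) ^ ((1 : ℤ) - n) * A ξ)
    (ℓ : Fin n) :
    ∫ ω : Metric.sphere (0 : EuclideanSpace ℝ (Fin n)) 1,
        fderiv ℝ A (ω : EuclideanSpace ℝ (Fin n)) (EuclideanSpace.single ℓ 1)
      ∂((volume : Measure (EuclideanSpace ℝ (Fin n))).toSphere) = 0 :=
  sphere_integral_of_partial_deriv_of_homogeneous_eq_zero_general n A hA_smooth hA_homog ℓ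
end

section
/- Let n ≥ 2, let a, b ∈ ℤ, and let γ be a multi-index (an n-tuple of nonnegative integers). Let σ, τ : ℝⁿ × (ℝⁿ \ {0}) → ℂ be smooth functions, 2π-periodic in each component of the first variable x, positively homogeneous in ξ of degrees a and b respectively. Then there exist smooth functions A_1, …, A_n and B_1, …, B_n on ℝⁿ × (ℝⁿ \ {0}), all 2π-periodic in x, with each A_ℓ positively homogeneous in ξ of degree a+b−|γ|+1 and each B_ℓ positively homogeneous in ξ of degree a+b−|γ|, such that (∂_ξ^γ σ)(D_x^γ τ) − (D_x^γ σ)(∂_ξ^γ τ) = Σ_{ℓ=1}^{n} ( ∂_{ξ_ℓ} A_ℓ + D_{x_ℓ} B_ℓ ) on ℝⁿ × (ℝⁿ \ {0}). -/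
open Real

/-- The partial derivative `∂_ℓ f` of `f : ℝⁿ → ℂ`. -/
noncomputable def partialDeriv (n : ℕ) (ℓ : Fin n) (f : (Fin n → ℝ) → ℂ) :
    (Fin n → ℝ) → ℂ :=
  fun v => fderiv ℝ f v (Pi.single ℓ 1)

/-- The iterated partial derivative `∂^γ f` for a multi-index `γ`. -/
noncomputable def partialDerivIter (n : ℕ) (γ : Fin n → ℕ) (f : (Fin n → ℝ) → ℂ) :
    (Fin n → ℝ) → ℂ :=
  (List.finRange n).foldr (fun ℓ g => (partialDeriv n ℓ)^[γ ℓ] g) f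

/-- `∂_ξ^γ σ` for `σ = σ(x, ξ)`. -/
noncomputable def partialXi (n : ℕ) (γ : Fin n → ℕ)
    (σ : (Fin n → ℝ) → (Fin n → ℝ) → ℂ) : (Fin n → ℝ) → (Fin n → ℝ) → ℂ :=
  fun x => partialDerivIter n γ (σ x)

/-- `∂_x^γ σ` for `σ = σ(x, ξ)`. -/
noncomputable def partialX (n : ℕ) (γ : Fin n → ℕ)
    (σ : (Fin n → ℝ) → (Fin n → ℝ) → ℂ) : (Fin n → ℝ) → (Fin n → ℝ) → ℂ :=
  fun x ξ => partialDerivIter n γ (fun x' => σ x' ξ) x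

/-- `D_x^γ σ = (−i)^{|γ|} ∂_x^γ σ`. -/
noncomputable def DxIter (n : ℕ) (γ : Fin n → ℕ)
    (σ : (Fin n → ℝ) → (Fin n → ℝ) → ℂ) : (Fin n → ℝ) → (Fin n → ℝ) → ℂ :=
  fun x ξ => (-Complex.I) ^ (∑ ℓ, γ ℓ) * partialX n γ σ x ξ

/-! Peel one index `j` off the multi-index: `γ = γ' + e_j`. With `F = ∂_ξ^{γ'} σ`,
`G = ∂_x^{γ'} τ`, `F' = ∂_x^{γ'} σ`, `G' = ∂_ξ^{γ'} τ`, the product rule gives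
`∂_{ξ_j}F · ∂_{x_j}G - ∂_{x_j}F' · ∂_{ξ_j}G'
  = ∂_{ξ_j}(F ∂_{x_j}G) - ∂_{x_j}(F' ∂_{ξ_j}G') - (F ∂_{ξ_j}∂_{x_j}G - F' ∂_{x_j}∂_{ξ_j}G')`,
and since mixed partials commute on `ξ ≠ 0`, the last bracket is the same expression for `γ'`
with `τ` replaced by `∂_{ξ_j}∂_{x_j}τ`, a symbol of degree `b - 1`. Induction on `|γ|` then
produces `A` and `B`, and the factor `(-i)^{|γ|}` of `D_x^γ` is absorbed into them. -/

open Set Complex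
open scoped ContDiff

section DirectionalDerivative

variable {E F 𝔸 G : Type*} [NormedAddCommGroup E] [NormedSpace ℝ E]
  [NormedAddCommGroup F] [NormedSpace ℝ F] [NormedAddCommGroup G] [NormedSpace ℝ G]
  [NormedCommRing 𝔸] [NormedAlgebra ℝ 𝔸]

noncomputable def dirDeriv (v : E) (f : E → G) : E → G := fun p => fderiv ℝ f p v

noncomputable def dirDerivWord (vs : List E) (f : E → G) : E → G := vs.foldr dirDeriv f

variable {U : Set E} {f g : E → G} {p : E}

lemma ContDiffOn.dirDeriv (hf : ContDiffOn ℝ ∞ f U) (hU : IsOpen U) (v : E) :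
    ContDiffOn ℝ ∞ (dirDeriv v f) U :=
  (hf.fderiv_of_isOpen hU (by simp)).clm_apply contDiffOn_const

lemma ContDiffOn.dirDerivWord (hf : ContDiffOn ℝ ∞ f U) (hU : IsOpen U) (vs : List E) :
    ContDiffOn ℝ ∞ (dirDerivWord vs f) U := by
  induction vs with
  | nil => exact hf
  | cons v vs ih => exact ih.dirDeriv hU v

lemma dirDeriv_congr (hU : IsOpen U) (h : EqOn f g U) (v : E) :
    EqOn (dirDeriv v f) (dirDeriv v g) U := fun p hp => by
  simp only [dirDeriv, (h.eventuallyEq_of_mem (hU.mem_nhds hp)).fderiv_eq]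

lemma dirDeriv_sub (hf : DifferentiableAt ℝ f p) (hg : DifferentiableAt ℝ g p) (v : E) :
    dirDeriv v (f - g) p = dirDeriv v f p - dirDeriv v g p := by
  simp [dirDeriv, fderiv_sub hf hg]

lemma dirDeriv_mul {f g : E → 𝔸} (hf : DifferentiableAt ℝ f p) (hg : DifferentiableAt ℝ g p)
    (v : E) : dirDeriv v (fun q => f q * g q) p = dirDeriv v f p * g p + f p * dirDeriv v g p := by
  simp only [dirDeriv, fderiv_fun_mul hf hg, add_apply, smul_apply, smul_eq_mul]
  ring

lemma dirDeriv_const_mul {f : E → 𝔸} (hf : DifferentiableAt ℝ f p) (c : 𝔸) (v : E) :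
    dirDeriv v (fun q => c * f q) p = c * dirDeriv v f p := by
  simp [dirDeriv, fderiv_const_mul hf]

lemma dirDeriv_comm (hf : ContDiffOn ℝ ∞ f U) (hU : IsOpen U) (hp : p ∈ U) (v w : E) :
    dirDeriv v (dirDeriv w f) p = dirDeriv w (dirDeriv v f) p := by
  have hfp : ContDiffAt ℝ ∞ f p := hf.contDiffAt (hU.mem_nhds hp)
  have hf' : DifferentiableAt ℝ (fderiv ℝ f) p :=
    ((hf.fderiv_of_isOpen hU (m := ∞) (by simp)).differentiableOn (by simp)).differentiableAt
      (hU.mem_nhds hp)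
  have eq_second : ∀ u u', dirDeriv u (dirDeriv u' f) p = fderiv ℝ (fderiv ℝ f) p u u' := by
    intro u u'
    change fderiv ℝ (fun q => fderiv ℝ f q u') p u = _
    simp [fderiv_clm_apply hf' (differentiableAt_const u')]
  rw [eq_second, eq_second, hfp.isSymmSndFDerivAt
    (by rw [minSmoothness_of_isRCLikeNormedField]; exact ENat.LEInfty.out)]

lemma dirDeriv_dirDerivWord (hf : ContDiffOn ℝ ∞ f U) (hU : IsOpen U) (v : E) (ws : List E) :
    EqOn (dirDeriv v (dirDerivWord ws f)) (dirDerivWord ws (dirDeriv v f)) U := by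
  induction ws with
  | nil => exact fun _ _ => rfl
  | cons w ws ih =>
    intro p hp
    calc dirDeriv v (dirDeriv w (dirDerivWord ws f)) p
        = dirDeriv w (dirDeriv v (dirDerivWord ws f)) p :=
          dirDeriv_comm (hf.dirDerivWord hU ws) hU hp v w
      _ = dirDeriv w (dirDerivWord ws (dirDeriv v f)) p := dirDeriv_congr hU ih w hp

lemma dirDeriv_dirDeriv_dirDerivWord (hf : ContDiffOn ℝ ∞ f U) (hU : IsOpen U) (v v' : E)
    (ws : List E) :
    EqOn (dirDeriv v (dirDeriv v' (dirDerivWord ws f)))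
      (dirDerivWord ws (dirDeriv v (dirDeriv v' f))) U := fun _ hp =>
  (dirDeriv_congr hU (dirDeriv_dirDerivWord hf hU v' ws) v hp).trans
    (dirDeriv_dirDerivWord (hf.dirDeriv hU v') hU v ws hp)

lemma dirDeriv_comp {ι : F → E} {L : F →L[ℝ] E} {y : F} (hf : DifferentiableAt ℝ f (ι y))
    (hι : HasFDerivAt ι L y) (v : F) : dirDeriv v (f ∘ ι) y = dirDeriv (L v) f (ι y) := by
  simp [dirDeriv, fderiv_comp y hf hι.differentiableAt, hι.fderiv]

lemma dirDerivWord_comp {ι : F → E} {L : F →L[ℝ] E} (hι : ∀ y, HasFDerivAt ι L y)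
    (hf : ContDiffOn ℝ ∞ f U) (hU : IsOpen U) (vs : List F) :
    EqOn (dirDerivWord vs (f ∘ ι)) (dirDerivWord (vs.map L) f ∘ ι) (ι ⁻¹' U) := by
  have hV : IsOpen (ι ⁻¹' U) :=
    hU.preimage (continuous_iff_continuousAt.2 fun y => (hι y).continuousAt)
  induction vs with
  | nil => exact fun _ _ => rfl
  | cons v vs ih =>
    intro y hy
    calc dirDeriv v (dirDerivWord vs (f ∘ ι)) y
        = dirDeriv v (dirDerivWord (vs.map L) f ∘ ι) y := dirDeriv_congr hV ih v hy
      _ = dirDeriv (L v) (dirDerivWord (vs.map L) f) (ι y) :=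
          dirDeriv_comp (((hf.dirDerivWord hU _).differentiableOn (by simp)).differentiableAt
            (hU.mem_nhds hy)) (hι y) v

lemma Function.Periodic.dirDeriv {c : E} (hf : Function.Periodic f c) (v : E) :
    Function.Periodic (dirDeriv v f) c := fun p => by
  simp only [_root_.dirDeriv, ← fderiv_comp_add_right, hf.funext]

lemma dirDeriv_map_eq_mul_of_eqOn {f : E → 𝔸} {T : E →L[ℝ] E} {c : 𝔸} (hU : IsOpen U)
    (hT : MapsTo T U U) (hf : DifferentiableOn ℝ f U) (hfT : EqOn (f ∘ T) (fun q => c * f q) U)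
    (hp : p ∈ U) (v : E) : dirDeriv (T v) f (T p) = c * dirDeriv v f p := by
  rw [← dirDeriv_comp (hf.differentiableAt (hU.mem_nhds (hT hp))) T.hasFDerivAt,
    dirDeriv_congr hU hfT v hp, dirDeriv_const_mul (hf.differentiableAt (hU.mem_nhds hp))]

end DirectionalDerivative

section Symbols

variable {n : ℕ}

def phaseSpace (n : ℕ) : Set ((Fin n → ℝ) × (Fin n → ℝ)) := {p | p.2 ≠ 0}

lemma isOpen_phaseSpace : IsOpen (phaseSpace n) := isOpen_ne_fun continuous_snd continuous_const

def xDir (ℓ : Fin n) : (Fin n → ℝ) × (Fin n → ℝ) := (Pi.single ℓ 1, 0)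

def xiDir (ℓ : Fin n) : (Fin n → ℝ) × (Fin n → ℝ) := (0, Pi.single ℓ 1)

noncomputable def dilation (n : ℕ) (t : ℝ) :
    ((Fin n → ℝ) × (Fin n → ℝ)) →L[ℝ] (Fin n → ℝ) × (Fin n → ℝ) :=
  (ContinuousLinearMap.id ℝ _).prodMap (t • ContinuousLinearMap.id ℝ _)

@[simp]
lemma dilation_apply (t : ℝ) (p : (Fin n → ℝ) × (Fin n → ℝ)) : dilation n t p = (p.1, t • p.2) :=
  rfl

structure IsSymbol (d : ℤ) (Φ : (Fin n → ℝ) × (Fin n → ℝ) → ℂ) : Prop where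
  contDiffOn : ContDiffOn ℝ ∞ Φ (phaseSpace n)
  periodic : ∀ (k : Fin n) (p : (Fin n → ℝ) × (Fin n → ℝ)),
    Φ (p.1 + Pi.single k (2 * π), p.2) = Φ p
  homogeneous : ∀ t : ℝ, 0 < t → ∀ p ∈ phaseSpace n, Φ (p.1, t • p.2) = (t : ℂ) ^ d * Φ p

namespace IsSymbol

variable {d d' : ℤ} {Φ Ψ : (Fin n → ℝ) × (Fin n → ℝ) → ℂ}

lemma differentiableAt (h : IsSymbol d Φ) {p : (Fin n → ℝ) × (Fin n → ℝ)} (hp : p ∈ phaseSpace n) :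
    DifferentiableAt ℝ Φ p :=
  (h.contDiffOn.differentiableOn (by simp)).differentiableAt (isOpen_phaseSpace.mem_nhds hp)

lemma zero : IsSymbol d (0 : (Fin n → ℝ) × (Fin n → ℝ) → ℂ) :=
  ⟨contDiffOn_const, fun _ _ => rfl, fun _ _ _ _ => by simp⟩

lemma mul (hΦ : IsSymbol d Φ) (hΨ : IsSymbol d' Ψ) : IsSymbol (d + d') (fun p => Φ p * Ψ p) where
  contDiffOn := hΦ.contDiffOn.mul hΨ.contDiffOn
  periodic k p := by simp only [hΦ.periodic, hΨ.periodic]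
  homogeneous t ht p hp := by
    rw [hΦ.homogeneous t ht p hp, hΨ.homogeneous t ht p hp,
      zpow_add₀ (ofReal_ne_zero.2 ht.ne')]
    ring

lemma const_mul (h : IsSymbol d Φ) (c : ℂ) : IsSymbol d (fun p => c * Φ p) where
  contDiffOn := contDiffOn_const.mul h.contDiffOn
  periodic k p := by simp only [h.periodic]
  homogeneous t ht p hp := by rw [h.homogeneous t ht p hp]; ring

lemma sub (hΦ : IsSymbol d Φ) (hΨ : IsSymbol d Ψ) : IsSymbol d (Φ - Ψ) where
  contDiffOn := hΦ.contDiffOn.sub hΨ.contDiffOn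
  periodic k p := by simp only [Pi.sub_apply, hΦ.periodic, hΨ.periodic]
  homogeneous t ht p hp := by
    simp only [Pi.sub_apply, hΦ.homogeneous t ht p hp, hΨ.homogeneous t ht p hp]
    ring

lemma piSingle (h : IsSymbol d Φ) (j ℓ : Fin n) : IsSymbol d ((Pi.single j Φ : Fin n → _) ℓ) := by
  by_cases hℓ : ℓ = j
  · subst hℓ; simpa using h
  · simpa [hℓ] using (zero : IsSymbol d _)

lemma dirDeriv_of_homogeneous (h : IsSymbol d Φ) (v : (Fin n → ℝ) × (Fin n → ℝ)) {d' : ℤ}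
    (hv : ∀ t : ℝ, 0 < t → ∀ p ∈ phaseSpace n,
      dirDeriv v Φ (p.1, t • p.2) = (t : ℂ) ^ d' * dirDeriv v Φ p) :
    IsSymbol d' (dirDeriv v Φ) where
  contDiffOn := h.contDiffOn.dirDeriv isOpen_phaseSpace v
  periodic k p := by
    have shift : ∀ q : (Fin n → ℝ) × (Fin n → ℝ),
        q + (Pi.single k (2 * π), 0) = (q.1 + Pi.single k (2 * π), q.2) := fun q => by
      ext <;> simp
    rw [← shift]
    exact Function.Periodic.dirDeriv (fun q => shift q ▸ h.periodic k q) v p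
  homogeneous := hv

lemma dirDeriv_dilation (h : IsSymbol d Φ) {t : ℝ} (ht : 0 < t) {p : (Fin n → ℝ) × (Fin n → ℝ)}
    (hp : p ∈ phaseSpace n) (v : (Fin n → ℝ) × (Fin n → ℝ)) :
    dirDeriv (dilation n t v) Φ (dilation n t p) = (t : ℂ) ^ d * dirDeriv v Φ p :=
  dirDeriv_map_eq_mul_of_eqOn (T := dilation n t) isOpen_phaseSpace
    (fun q hq => smul_ne_zero ht.ne' hq) (h.contDiffOn.differentiableOn (by simp))
    (h.homogeneous t ht) hp v

lemma dirDeriv_xDir (h : IsSymbol d Φ) (ℓ : Fin n) : IsSymbol d (dirDeriv (xDir ℓ) Φ) :=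
  h.dirDeriv_of_homogeneous _ fun t ht p hp => by
    simpa [xDir] using h.dirDeriv_dilation ht hp (xDir ℓ)

lemma dirDeriv_xiDir (h : IsSymbol d Φ) (ℓ : Fin n) : IsSymbol (d - 1) (dirDeriv (xiDir ℓ) Φ) :=
  h.dirDeriv_of_homogeneous _ fun t ht p hp => by
    have ht' : (t : ℂ) ≠ 0 := ofReal_ne_zero.2 ht.ne'
    have hscale := h.dirDeriv_dilation ht hp (xiDir ℓ)
    rw [show dilation n t (xiDir ℓ) = t • xiDir ℓ by simp [xiDir]] at hscale
    simp only [dirDeriv, map_smul, real_smul, dilation_apply] at hscale ⊢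
    rw [zpow_sub_one₀ ht', ← mul_right_inj' ht', hscale]
    field_simp

end IsSymbol

end Symbols

section Bracket

variable {n : ℕ}

noncomputable def partialXiWord (w : List (Fin n)) (Φ : (Fin n → ℝ) × (Fin n → ℝ) → ℂ) :
    (Fin n → ℝ) × (Fin n → ℝ) → ℂ :=
  dirDerivWord (w.map xiDir) Φ

noncomputable def partialXWord (w : List (Fin n)) (Φ : (Fin n → ℝ) × (Fin n → ℝ) → ℂ) :
    (Fin n → ℝ) × (Fin n → ℝ) → ℂ :=
  dirDerivWord (w.map xDir) Φ

@[simp]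
lemma partialXiWord_nil (Φ : (Fin n → ℝ) × (Fin n → ℝ) → ℂ) : partialXiWord [] Φ = Φ := rfl

@[simp]
lemma partialXWord_nil (Φ : (Fin n → ℝ) × (Fin n → ℝ) → ℂ) : partialXWord [] Φ = Φ := rfl

lemma partialXiWord_cons (j : Fin n) (w : List (Fin n)) (Φ : (Fin n → ℝ) × (Fin n → ℝ) → ℂ) :
    partialXiWord (j :: w) Φ = dirDeriv (xiDir j) (partialXiWord w Φ) := rfl

lemma partialXWord_cons (j : Fin n) (w : List (Fin n)) (Φ : (Fin n → ℝ) × (Fin n → ℝ) → ℂ) :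
    partialXWord (j :: w) Φ = dirDeriv (xDir j) (partialXWord w Φ) := rfl

lemma IsSymbol.partialXiWord {d : ℤ} {Φ : (Fin n → ℝ) × (Fin n → ℝ) → ℂ} (h : IsSymbol d Φ)
    (w : List (Fin n)) : IsSymbol (d - w.length) (partialXiWord w Φ) := by
  induction w with
  | nil => simpa using h
  | cons j w ih =>
    rw [partialXiWord_cons, List.length_cons, Nat.cast_succ, ← sub_sub]
    exact ih.dirDeriv_xiDir j

lemma IsSymbol.partialXWord {d : ℤ} {Φ : (Fin n → ℝ) × (Fin n → ℝ) → ℂ} (h : IsSymbol d Φ)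
    (w : List (Fin n)) : IsSymbol d (partialXWord w Φ) := by
  induction w with
  | nil => exact h
  | cons j w ih => exact ih.dirDeriv_xDir j

noncomputable def bracketTerm (w : List (Fin n)) (Φ Ψ : (Fin n → ℝ) × (Fin n → ℝ) → ℂ) :
    (Fin n → ℝ) × (Fin n → ℝ) → ℂ := fun p =>
  partialXiWord w Φ p * partialXWord w Ψ p - partialXWord w Φ p * partialXiWord w Ψ p

noncomputable def phaseDiv (A B : Fin n → (Fin n → ℝ) × (Fin n → ℝ) → ℂ)
    (p : (Fin n → ℝ) × (Fin n → ℝ)) : ℂ :=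
  ∑ ℓ, (dirDeriv (xiDir ℓ) (A ℓ) p + -I * dirDeriv (xDir ℓ) (B ℓ) p)

section PhaseDiv

variable {A A' B B' : Fin n → (Fin n → ℝ) × (Fin n → ℝ) → ℂ} {p : (Fin n → ℝ) × (Fin n → ℝ)}

lemma phaseDiv_zero : phaseDiv (0 : Fin n → (Fin n → ℝ) × (Fin n → ℝ) → ℂ) 0 p = 0 := by
  simp [phaseDiv, dirDeriv]

lemma phaseDiv_sub (hA : ∀ ℓ, DifferentiableAt ℝ (A ℓ) p) (hA' : ∀ ℓ, DifferentiableAt ℝ (A' ℓ) p)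
    (hB : ∀ ℓ, DifferentiableAt ℝ (B ℓ) p) (hB' : ∀ ℓ, DifferentiableAt ℝ (B' ℓ) p) :
    phaseDiv (A - A') (B - B') p = phaseDiv A B p - phaseDiv A' B' p := by
  simp only [phaseDiv, ← Finset.sum_sub_distrib]
  refine Finset.sum_congr rfl fun ℓ _ => ?_
  rw [Pi.sub_apply, Pi.sub_apply, dirDeriv_sub (hA ℓ) (hA' ℓ), dirDeriv_sub (hB ℓ) (hB' ℓ)]
  ring

lemma phaseDiv_piSingle (j : Fin n) (f g : (Fin n → ℝ) × (Fin n → ℝ) → ℂ) :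
    phaseDiv (Pi.single j f) (Pi.single j g) p
      = dirDeriv (xiDir j) f p + -I * dirDeriv (xDir j) g p := by
  rw [phaseDiv, Finset.sum_eq_single j (fun ℓ _ hℓ => by simp [hℓ, dirDeriv]) (by simp)]
  simp

lemma phaseDiv_const_smul (hA : ∀ ℓ, DifferentiableAt ℝ (A ℓ) p)
    (hB : ∀ ℓ, DifferentiableAt ℝ (B ℓ) p) (c : ℂ) :
    phaseDiv (c • A) (c • B) p = c * phaseDiv A B p := by
  simp only [phaseDiv, Finset.mul_sum]
  refine Finset.sum_congr rfl fun ℓ _ => ?_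
  rw [Pi.smul_apply, Pi.smul_apply, show c • A ℓ = fun q => c * A ℓ q from rfl,
    show c • B ℓ = fun q => c * B ℓ q from rfl, dirDeriv_const_mul (hA ℓ),
    dirDeriv_const_mul (hB ℓ)]
  ring

end PhaseDiv

lemma bracketTerm_cons {Φ Ψ : (Fin n → ℝ) × (Fin n → ℝ) → ℂ}
    (hΦ : ContDiffOn ℝ ∞ Φ (phaseSpace n)) (hΨ : ContDiffOn ℝ ∞ Ψ (phaseSpace n))
    (j : Fin n) (w : List (Fin n)) {p : (Fin n → ℝ) × (Fin n → ℝ)} (hp : p ∈ phaseSpace n) :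
    bracketTerm (j :: w) Φ Ψ p =
      dirDeriv (xiDir j) (fun q => partialXiWord w Φ q * dirDeriv (xDir j) (partialXWord w Ψ) q) p
      - dirDeriv (xDir j)
          (fun q => partialXWord w Φ q * dirDeriv (xiDir j) (partialXiWord w Ψ) q) p
      - bracketTerm w Φ (dirDeriv (xiDir j) (dirDeriv (xDir j) Ψ)) p := by
  have hU := isOpen_phaseSpace (n := n)
  have diff : ∀ {f : (Fin n → ℝ) × (Fin n → ℝ) → ℂ}, ContDiffOn ℝ ∞ f (phaseSpace n) →
      DifferentiableAt ℝ f p := fun hf =>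
    (hf.differentiableOn (by simp)).differentiableAt (hU.mem_nhds hp)
  have hXiΦ : ContDiffOn ℝ ∞ (partialXiWord w Φ) (phaseSpace n) := hΦ.dirDerivWord hU _
  have hXΦ : ContDiffOn ℝ ∞ (partialXWord w Φ) (phaseSpace n) := hΦ.dirDerivWord hU _
  have hXiΨ : ContDiffOn ℝ ∞ (partialXiWord w Ψ) (phaseSpace n) := hΨ.dirDerivWord hU _
  have hXΨ : ContDiffOn ℝ ∞ (partialXWord w Ψ) (phaseSpace n) := hΨ.dirDerivWord hU _
  have mixedX : dirDeriv (xiDir j) (dirDeriv (xDir j) (partialXWord w Ψ)) p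
      = partialXWord w (dirDeriv (xiDir j) (dirDeriv (xDir j) Ψ)) p :=
    dirDeriv_dirDeriv_dirDerivWord hΨ hU _ _ _ hp
  have mixedXi : dirDeriv (xDir j) (dirDeriv (xiDir j) (partialXiWord w Ψ)) p
      = partialXiWord w (dirDeriv (xiDir j) (dirDeriv (xDir j) Ψ)) p :=
    (dirDeriv_comm hXiΨ hU hp _ _).trans (dirDeriv_dirDeriv_dirDerivWord hΨ hU _ _ _ hp)
  rw [dirDeriv_mul (diff hXiΦ) (diff (hXΨ.dirDeriv hU _)),
    dirDeriv_mul (diff hXΦ) (diff (hXiΨ.dirDeriv hU _)), mixedX, mixedXi]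
  simp only [bracketTerm, partialXiWord_cons, partialXWord_cons]
  ring

theorem exists_bracketTerm_eq_phaseDiv {a : ℤ} {Φ : (Fin n → ℝ) × (Fin n → ℝ) → ℂ}
    (hΦ : IsSymbol a Φ) (w : List (Fin n)) {b : ℤ} {Ψ : (Fin n → ℝ) × (Fin n → ℝ) → ℂ}
    (hΨ : IsSymbol b Ψ) :
    ∃ A B : Fin n → (Fin n → ℝ) × (Fin n → ℝ) → ℂ,
      (∀ ℓ, IsSymbol (a + b - w.length + 1) (A ℓ)) ∧ (∀ ℓ, IsSymbol (a + b - w.length) (B ℓ)) ∧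
      EqOn (bracketTerm w Φ Ψ) (phaseDiv A B) (phaseSpace n) := by
  induction w generalizing b Ψ with
  | nil =>
    refine ⟨0, 0, fun _ => IsSymbol.zero, fun _ => IsSymbol.zero, fun p _ => ?_⟩
    simp [bracketTerm, phaseDiv_zero]
  | cons j w ih =>
    obtain ⟨A, B, hA, hB, hAB⟩ := ih ((hΨ.dirDeriv_xDir j).dirDeriv_xiDir j)
    set A₀ := fun q => partialXiWord w Φ q * dirDeriv (xDir j) (partialXWord w Ψ) q
    set B₀ := fun q => -I * (partialXWord w Φ q * dirDeriv (xiDir j) (partialXiWord w Ψ) q)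
    have hdeg : a + (b - 1) - w.length = a + b - (j :: w).length := by
      push_cast [List.length_cons]; ring
    have hA₀ : IsSymbol (a + b - (j :: w).length + 1) A₀ := by
      convert (hΦ.partialXiWord w).mul ((hΨ.partialXWord w).dirDeriv_xDir j) using 1
      push_cast [List.length_cons]; ring
    have hB₀ : IsSymbol (a + b - (j :: w).length) B₀ := by
      convert ((hΦ.partialXWord w).mul ((hΨ.partialXiWord w).dirDeriv_xiDir j)).const_mul (-I)
        using 1
      push_cast [List.length_cons]; ring
    refine ⟨Pi.single j A₀ - A, Pi.single j B₀ - B, fun ℓ => (hA₀.piSingle j ℓ).sub (hdeg ▸ hA ℓ),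
      fun ℓ => (hB₀.piSingle j ℓ).sub (hdeg ▸ hB ℓ), fun p hp => ?_⟩
    have diff {d : ℤ} {f} (hf : IsSymbol d f) := hf.differentiableAt hp
    rw [phaseDiv_sub (fun ℓ => diff (hA₀.piSingle j ℓ)) (fun ℓ => diff (hA ℓ))
      (fun ℓ => diff (hB₀.piSingle j ℓ)) (fun ℓ => diff (hB ℓ)), phaseDiv_piSingle, ← hAB hp,
      bracketTerm_cons hΦ.contDiffOn hΨ.contDiffOn j w hp, dirDeriv_const_mul]
    · linear_combination -(dirDeriv (xDir j) (fun q => partialXWord w Φ q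
        * dirDeriv (xiDir j) (partialXiWord w Ψ) q) p) * I_mul_I
    · exact diff ((hΦ.partialXWord w).mul ((hΨ.partialXiWord w).dirDeriv_xiDir j))

section MultiIndex

variable {n : ℕ}

def multiIndexWord (γ : Fin n → ℕ) : List (Fin n) :=
  (List.finRange n).flatMap fun ℓ => List.replicate (γ ℓ) ℓ

lemma length_multiIndexWord (γ : Fin n → ℕ) : (multiIndexWord γ).length = ∑ ℓ, γ ℓ := by
  simp [multiIndexWord, List.length_flatMap, Fin.sum_univ_def]

lemma partialDerivIter_eq_dirDerivWord (γ : Fin n → ℕ) (f : (Fin n → ℝ) → ℂ) :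
    partialDerivIter n γ f = dirDerivWord ((multiIndexWord γ).map fun ℓ => Pi.single ℓ 1) f := by
  rw [partialDerivIter, multiIndexWord, List.map_flatMap, dirDerivWord, List.foldr_flatMap]
  congr 1
  funext ℓ g
  rw [List.map_replicate]
  induction γ ℓ with
  | zero => rfl
  | succ k ih => rw [Function.iterate_succ_apply', List.replicate_succ, List.foldr_cons, ih]; rfl

lemma partialXi_eq_partialXiWord {σ : (Fin n → ℝ) → (Fin n → ℝ) → ℂ}
    (hσ : ContDiffOn ℝ ∞ (Function.uncurry σ) (phaseSpace n)) (γ : Fin n → ℕ) {x ξ : Fin n → ℝ}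
    (hξ : ξ ≠ 0) :
    partialXi n γ σ x ξ = partialXiWord (multiIndexWord γ) (Function.uncurry σ) (x, ξ) := by
  have h := dirDerivWord_comp (fun _ => hasFDerivAt_prodMk_right x _) hσ isOpen_phaseSpace
    ((multiIndexWord γ).map fun ℓ => Pi.single ℓ 1) hξ
  rw [List.map_map] at h
  rw [partialXi, partialDerivIter_eq_dirDerivWord]
  exact h

lemma partialX_eq_partialXWord {σ : (Fin n → ℝ) → (Fin n → ℝ) → ℂ}
    (hσ : ContDiffOn ℝ ∞ (Function.uncurry σ) (phaseSpace n)) (γ : Fin n → ℕ) {x ξ : Fin n → ℝ}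
    (hξ : ξ ≠ 0) :
    partialX n γ σ x ξ = partialXWord (multiIndexWord γ) (Function.uncurry σ) (x, ξ) := by
  have h := dirDerivWord_comp (fun _ => hasFDerivAt_prodMk_left _ ξ) hσ isOpen_phaseSpace
    ((multiIndexWord γ).map fun ℓ => Pi.single ℓ 1)
    (show x ∈ (fun x' => (x', ξ)) ⁻¹' phaseSpace n from hξ)
  rw [List.map_map] at h
  rw [partialX, partialDerivIter_eq_dirDerivWord]
  exact h

lemma phaseDiv_eq_sum_fderiv {A B : Fin n → (Fin n → ℝ) × (Fin n → ℝ) → ℂ} {x ξ : Fin n → ℝ}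
    (hA : ∀ ℓ, DifferentiableAt ℝ (A ℓ) (x, ξ)) (hB : ∀ ℓ, DifferentiableAt ℝ (B ℓ) (x, ξ)) :
    phaseDiv A B (x, ξ) = ∑ ℓ, (fderiv ℝ (Function.curry (A ℓ) x) ξ (Pi.single ℓ 1)
      + -I * fderiv ℝ (fun x' => Function.curry (B ℓ) x' ξ) x (Pi.single ℓ 1)) :=
  Finset.sum_congr rfl fun ℓ _ => congr_arg₂ (fun u v => u + -I * v)
    (dirDeriv_comp (hA ℓ) (hasFDerivAt_prodMk_right x ξ) (Pi.single ℓ 1)).symm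
    (dirDeriv_comp (ι := fun x' => (x', ξ)) (hB ℓ) (hasFDerivAt_prodMk_left x ξ)
      (Pi.single ℓ 1)).symm

end MultiIndex

theorem bracket_eq_sum_of_derivatives_general
    (n : ℕ) (a b : ℤ) (γ : Fin n → ℕ)
    (σ τ : (Fin n → ℝ) → (Fin n → ℝ) → ℂ)
    (hσ_smooth : ContDiffOn ℝ (⊤ : ℕ∞)
      (fun p : (Fin n → ℝ) × (Fin n → ℝ) => σ p.1 p.2)
      {p : (Fin n → ℝ) × (Fin n → ℝ) | p.2 ≠ 0})
    (hτ_smooth : ContDiffOn ℝ (⊤ : ℕ∞)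
      (fun p : (Fin n → ℝ) × (Fin n → ℝ) => τ p.1 p.2)
      {p : (Fin n → ℝ) × (Fin n → ℝ) | p.2 ≠ 0})
    (hσ_per : ∀ (x ξ : Fin n → ℝ) (ℓ : Fin n),
      σ (x + Pi.single ℓ (2 * π)) ξ = σ x ξ)
    (hτ_per : ∀ (x ξ : Fin n → ℝ) (ℓ : Fin n),
      τ (x + Pi.single ℓ (2 * π)) ξ = τ x ξ)
    (hσ_homog : ∀ (x : Fin n → ℝ) (t : ℝ), 0 < t → ∀ (ξ : Fin n → ℝ), ξ ≠ 0 →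
      σ x (t • ξ) = (t : ℂ) ^ a * σ x ξ)
    (hτ_homog : ∀ (x : Fin n → ℝ) (t : ℝ), 0 < t → ∀ (ξ : Fin n → ℝ), ξ ≠ 0 →
      τ x (t • ξ) = (t : ℂ) ^ b * τ x ξ) :
    ∃ A B : Fin n → (Fin n → ℝ) → (Fin n → ℝ) → ℂ,
      (∀ ℓ, ContDiffOn ℝ (⊤ : ℕ∞)
        (fun p : (Fin n → ℝ) × (Fin n → ℝ) => A ℓ p.1 p.2)
        {p : (Fin n → ℝ) × (Fin n → ℝ) | p.2 ≠ 0}) ∧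
      (∀ ℓ, ContDiffOn ℝ (⊤ : ℕ∞)
        (fun p : (Fin n → ℝ) × (Fin n → ℝ) => B ℓ p.1 p.2)
        {p : (Fin n → ℝ) × (Fin n → ℝ) | p.2 ≠ 0}) ∧
      (∀ ℓ (x ξ : Fin n → ℝ) (k : Fin n),
        A ℓ (x + Pi.single k (2 * π)) ξ = A ℓ x ξ ∧
        B ℓ (x + Pi.single k (2 * π)) ξ = B ℓ x ξ) ∧
      (∀ ℓ (x : Fin n → ℝ) (t : ℝ), 0 < t → ∀ (ξ : Fin n → ℝ), ξ ≠ 0 →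
        A ℓ x (t • ξ) = (t : ℂ) ^ (a + b - (∑ i, γ i : ℕ) + 1) * A ℓ x ξ) ∧
      (∀ ℓ (x : Fin n → ℝ) (t : ℝ), 0 < t → ∀ (ξ : Fin n → ℝ), ξ ≠ 0 →
        B ℓ x (t • ξ) = (t : ℂ) ^ (a + b - (∑ i, γ i : ℕ)) * B ℓ x ξ) ∧
      (∀ (x ξ : Fin n → ℝ), ξ ≠ 0 →
        partialXi n γ σ x ξ * DxIter n γ τ x ξ
          - DxIter n γ σ x ξ * partialXi n γ τ x ξ
        = ∑ ℓ : Fin n,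
            (fderiv ℝ (A ℓ x) ξ (Pi.single ℓ 1)
              + (-Complex.I) * fderiv ℝ (fun x' => B ℓ x' ξ) x (Pi.single ℓ 1))) := by
  have hσ : IsSymbol a (Function.uncurry σ) :=
    ⟨hσ_smooth, fun k p => hσ_per p.1 p.2 k, fun t ht p hp => hσ_homog p.1 t ht p.2 hp⟩
  have hτ : IsSymbol b (Function.uncurry τ) :=
    ⟨hτ_smooth, fun k p => hτ_per p.1 p.2 k, fun t ht p hp => hτ_homog p.1 t ht p.2 hp⟩
  obtain ⟨A, B, hA, hB, hAB⟩ := exists_bracketTerm_eq_phaseDiv hσ (multiIndexWord γ) hτ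
  rw [length_multiIndexWord] at hA hB
  set c : ℂ := (-Complex.I) ^ (∑ ℓ, γ ℓ)
  have hcA ℓ := (hA ℓ).const_mul c
  have hcB ℓ := (hB ℓ).const_mul c
  refine ⟨fun ℓ => Function.curry ((c • A) ℓ), fun ℓ => Function.curry ((c • B) ℓ),
    fun ℓ => (hcA ℓ).contDiffOn, fun ℓ => (hcB ℓ).contDiffOn,
    fun ℓ x ξ k => ⟨(hcA ℓ).periodic k (x, ξ), (hcB ℓ).periodic k (x, ξ)⟩,
    fun ℓ x t ht ξ hξ => (hcA ℓ).homogeneous t ht (x, ξ) hξ,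
    fun ℓ x t ht ξ hξ => (hcB ℓ).homogeneous t ht (x, ξ) hξ, fun x ξ hξ => ?_⟩
  have hp : (x, ξ) ∈ phaseSpace n := hξ
  calc _ = c * bracketTerm (multiIndexWord γ) (Function.uncurry σ) (Function.uncurry τ) (x, ξ) := by
        rw [DxIter, DxIter, partialXi_eq_partialXiWord hσ_smooth γ hξ,
          partialXi_eq_partialXiWord hτ_smooth γ hξ, partialX_eq_partialXWord hσ_smooth γ hξ,
          partialX_eq_partialXWord hτ_smooth γ hξ, bracketTerm]
        ring
    _ = phaseDiv (c • A) (c • B) (x, ξ) := by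
        rw [hAB hp, phaseDiv_const_smul (fun ℓ => (hA ℓ).differentiableAt hp)
          (fun ℓ => (hB ℓ).differentiableAt hp)]
    _ = _ := phaseDiv_eq_sum_fderiv (fun ℓ => (hcA ℓ).differentiableAt hp)
        (fun ℓ => (hcB ℓ).differentiableAt hp)

/-- Let `n ≥ 2`, `a, b ∈ ℤ`, and `γ` a multi-index. Let `σ, τ` be smooth on
`ℝⁿ × (ℝⁿ \ {0})`, `2π`-periodic in `x`, positively homogeneous in `ξ` of degrees `a` and `b`.
Then there exist smooth `A_1, …, A_n` and `B_1, …, B_n`, `2π`-periodic in `x`, with `A_ℓ`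
homogeneous of degree `a+b−|γ|+1` and `B_ℓ` homogeneous of degree `a+b−|γ|` in `ξ`, such that
`(∂_ξ^γ σ)(D_x^γ τ) − (D_x^γ σ)(∂_ξ^γ τ) = Σ_ℓ ( ∂_{ξ_ℓ} A_ℓ + D_{x_ℓ} B_ℓ )`
on `ℝⁿ × (ℝⁿ \ {0})`. -/
theorem bracket_eq_sum_of_derivatives
    (n : ℕ) (hn : 2 ≤ n) (a b : ℤ) (γ : Fin n → ℕ)
    (σ τ : (Fin n → ℝ) → (Fin n → ℝ) → ℂ)
    (hσ_smooth : ContDiffOn ℝ (⊤ : ℕ∞)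
      (fun p : (Fin n → ℝ) × (Fin n → ℝ) => σ p.1 p.2)
      {p : (Fin n → ℝ) × (Fin n → ℝ) | p.2 ≠ 0})
    (hτ_smooth : ContDiffOn ℝ (⊤ : ℕ∞)
      (fun p : (Fin n → ℝ) × (Fin n → ℝ) => τ p.1 p.2)
      {p : (Fin n → ℝ) × (Fin n → ℝ) | p.2 ≠ 0})
    (hσ_per : ∀ (x ξ : Fin n → ℝ) (ℓ : Fin n),
      σ (x + Pi.single ℓ (2 * π)) ξ = σ x ξ)
    (hτ_per : ∀ (x ξ : Fin n → ℝ) (ℓ : Fin n),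
      τ (x + Pi.single ℓ (2 * π)) ξ = τ x ξ)
    (hσ_homog : ∀ (x : Fin n → ℝ) (t : ℝ), 0 < t → ∀ (ξ : Fin n → ℝ), ξ ≠ 0 →
      σ x (t • ξ) = (t : ℂ) ^ a * σ x ξ)
    (hτ_homog : ∀ (x : Fin n → ℝ) (t : ℝ), 0 < t → ∀ (ξ : Fin n → ℝ), ξ ≠ 0 →
      τ x (t • ξ) = (t : ℂ) ^ b * τ x ξ) :
    ∃ A B : Fin n → (Fin n → ℝ) → (Fin n → ℝ) → ℂ,
      (∀ ℓ, ContDiffOn ℝ (⊤ : ℕ∞)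
        (fun p : (Fin n → ℝ) × (Fin n → ℝ) => A ℓ p.1 p.2)
        {p : (Fin n → ℝ) × (Fin n → ℝ) | p.2 ≠ 0}) ∧
      (∀ ℓ, ContDiffOn ℝ (⊤ : ℕ∞)
        (fun p : (Fin n → ℝ) × (Fin n → ℝ) => B ℓ p.1 p.2)
        {p : (Fin n → ℝ) × (Fin n → ℝ) | p.2 ≠ 0}) ∧
      (∀ ℓ (x ξ : Fin n → ℝ) (k : Fin n),
        A ℓ (x + Pi.single k (2 * π)) ξ = A ℓ x ξ ∧
        B ℓ (x + Pi.single k (2 * π)) ξ = B ℓ x ξ) ∧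
      (∀ ℓ (x : Fin n → ℝ) (t : ℝ), 0 < t → ∀ (ξ : Fin n → ℝ), ξ ≠ 0 →
        A ℓ x (t • ξ) = (t : ℂ) ^ (a + b - (∑ i, γ i : ℕ) + 1) * A ℓ x ξ) ∧
      (∀ ℓ (x : Fin n → ℝ) (t : ℝ), 0 < t → ∀ (ξ : Fin n → ℝ), ξ ≠ 0 →
        B ℓ x (t • ξ) = (t : ℂ) ^ (a + b - (∑ i, γ i : ℕ)) * B ℓ x ξ) ∧
      (∀ (x ξ : Fin n → ℝ), ξ ≠ 0 →
        partialXi n γ σ x ξ * DxIter n γ τ x ξ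
          - DxIter n γ σ x ξ * partialXi n γ τ x ξ
        = ∑ ℓ : Fin n,
            (fderiv ℝ (A ℓ x) ξ (Pi.single ℓ 1)
              + (-Complex.I) * fderiv ℝ (fun x' => B ℓ x' ξ) x (Pi.single ℓ 1))) :=
  bracket_eq_sum_of_derivatives_general n a b γ σ τ hσ_smooth hτ_smooth hσ_per hτ_per hσ_homog
    hτ_homog
end Bracket
end

section
/- Let n ≥ 1 and let f : ℝⁿ → ℂ be a smooth function which is 2π-periodic in each variable and satisfies ∫_{[0,2π]^n} f(x) dx = 0. Then there exist smooth functions g_1, …, g_n : ℝⁿ → ℂ, each 2π-periodic in each variable, such that f = Σ_{ℓ=1}^{n} ∂_{x_ℓ} g_ℓ. -/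
/-!
Average `f` successively along the coordinate directions: with
`A₀ = f` and `Aₗ₊₁(x) = (2π)⁻¹ ∫₀^{2π} Aₗ(x + s eₗ) ds`, each averaging preserves smoothness,
periodicity and the integral over the period cell, and `Aₙ` is invariant along every
coordinate, hence constant, hence equal to the mean of `f`, which is `0`. Each difference is a
derivative: for a function `F` that is `T`-periodic along `v`, the derivative along `v` of
`x ↦ T⁻¹ ∫₀^T s F(x + s v) ds` is `F x - T⁻¹ ∫₀^T F(x + s v) ds` (integrate by parts in `s`).
So `gₗ(x) = (2π)⁻¹ ∫₀^{2π} s Aₗ(x + s eₗ) ds` works, since `∑ₗ (Aₗ - Aₗ₊₁) = A₀ - Aₙ = f`.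
-/

open MeasureTheory Real Set Function
open scoped Convolution

section ParametricIntegral

variable {P E : Type*} [NormedAddCommGroup P] [NormedSpace ℝ P] [NormedAddCommGroup E]
  [NormedSpace ℝ E]

theorem contDiff_intervalIntegral_of_contDiff_uncurry {n : ℕ∞} {G : P → ℝ → E}
    (hG : ContDiff ℝ n ↿G) (a b : ℝ) : ContDiff ℝ n fun p => ∫ t in a..b, G p t := by
  wlog hab : a ≤ b generalizing a b
  · simpa only [intervalIntegral.integral_symm b a] using (this b a (le_of_not_ge hab)).neg
  -- Cut `G` off outside a compact set of times: the integral becomes the convolution of the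
  -- indicator of `(a, b]` with a compactly supported smooth family, evaluated at `0`.
  let χ : ContDiffBump (0 : ℝ) := ⟨|a| + |b| + 1, |a| + |b| + 2, by positivity, by linarith⟩
  let g : P → ℝ → E := fun p u => χ u • G p (-u)
  have hg : ContDiff ℝ n ↿g :=
    (χ.contDiff.comp contDiff_snd).smul (hG.comp (contDiff_fst.prodMk contDiff_snd.neg))
  have hgs : ∀ p u, p ∈ univ → u ∉ Metric.closedBall 0 (|a| + |b| + 2) → g p u = 0 := by
    intro p u _ hu
    have : χ u = 0 := Function.notMem_support.1 fun h =>
      hu (Metric.ball_subset_closedBall (χ.support_eq ▸ h))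
    simp [g, this]
  have hind : LocallyIntegrable ((Ioc a b).indicator 1 : ℝ → ℝ) volume :=
    (integrableOn_const (by simp) : IntegrableOn (fun _ => (1:ℝ)) (Ioc a b)).integrable_indicator
      measurableSet_Ioc |>.locallyIntegrable
  have hconv := contDiffOn_convolution_right_with_param_comp (ContinuousLinearMap.lsmul ℝ ℝ)
    (v := fun _ : P => (0 : ℝ)) contDiffOn_const isOpen_univ (isCompact_closedBall 0 _) hgs hind
    hg.contDiffOn
  rw [contDiffOn_univ] at hconv
  convert hconv using 1
  ext p
  rw [convolution_def, intervalIntegral.integral_of_le hab, ← integral_indicator measurableSet_Ioc]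
  congr 1 with t
  by_cases ht : t ∈ Ioc a b
  · have ht' : -t ∈ Metric.closedBall 0 (|a| + |b| + 1) := by
      rw [Metric.mem_closedBall, dist_zero_right, norm_neg, Real.norm_eq_abs, abs_le]
      constructor <;> linarith [ht.1, ht.2, neg_abs_le a, le_abs_self b, abs_nonneg a, abs_nonneg b]
    simp [g, ht, χ.one_of_mem_closedBall ht']
  · simp [ht]

end ParametricIntegral

theorem Function.Periodic.comp_add_smul {R V α : Type*} [Semiring R] [AddCommMonoid V]
    [Module R V] {F : V → α} {T : R} {v : V} (hF : Periodic F (T • v)) (x : V) :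
    Periodic (fun s : R => F (x + s • v)) T := by
  intro s
  simp only [add_smul, ← add_assoc, show ∀ y, F (y + T • v) = F y from hF]

section LineAverage

variable {V E : Type*} [NormedAddCommGroup V] [NormedSpace ℝ V] [NormedAddCommGroup E]
  [NormedSpace ℝ E]

noncomputable def lineAverage (T : ℝ) (v : V) (F : V → E) (x : V) : E :=
  T⁻¹ • ∫ s in 0..T, F (x + s • v)

noncomputable def linePrimitive (T : ℝ) (v : V) (F : V → E) (x : V) : E :=
  T⁻¹ • ∫ s in 0..T, s • F (x + s • v)

variable {T : ℝ} {v : V} {F : V → E}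

theorem Function.Periodic.lineAverage {w : V} (hF : Periodic F w) :
    Periodic (lineAverage T v F) w := by
  intro x
  simp only [_root_.lineAverage, add_right_comm x w, show ∀ y, F (y + w) = F y from hF]

theorem Function.Periodic.linePrimitive {w : V} (hF : Periodic F w) :
    Periodic (linePrimitive T v F) w := by
  intro x
  simp only [_root_.linePrimitive, add_right_comm x w, show ∀ y, F (y + w) = F y from hF]

theorem lineAverage_periodic_smul (hF : Periodic F (T • v)) (c : ℝ) :
    Periodic (lineAverage T v F) (c • v) := by
  intro x
  simp only [lineAverage]
  congr 1
  calc ∫ s in 0..T, F (x + c • v + s • v) = ∫ s in 0..T, F (x + (s + c) • v) := by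
        simp only [add_smul, add_assoc, add_comm (c • v)]
    _ = ∫ s in c..c + T, F (x + s • v) := by
        rw [intervalIntegral.integral_comp_add_right (fun s => F (x + s • v)), zero_add, add_comm]
    _ = ∫ s in 0..0 + T, F (x + s • v) := (hF.comp_add_smul x).intervalIntegral_add_eq c 0
    _ = ∫ s in 0..T, F (x + s • v) := by rw [zero_add]

theorem ContDiff.lineAverage {k : ℕ∞} (hF : ContDiff ℝ k F) :
    ContDiff ℝ k (lineAverage T v F) :=
  (contDiff_intervalIntegral_of_contDiff_uncurry (G := fun x s => F (x + s • v))
    (hF.comp (contDiff_fst.add (contDiff_snd.smul contDiff_const))) 0 T).const_smul T⁻¹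

theorem ContDiff.linePrimitive {k : ℕ∞} (hF : ContDiff ℝ k F) :
    ContDiff ℝ k (linePrimitive T v F) :=
  (contDiff_intervalIntegral_of_contDiff_uncurry (G := fun x s => s • F (x + s • v))
    (contDiff_snd.smul (hF.comp (contDiff_fst.add (contDiff_snd.smul contDiff_const)))) 0 T
    ).const_smul T⁻¹

theorem hasLineDerivAt_linePrimitive [CompleteSpace E] (hT : T ≠ 0) (hF : Continuous F)
    (hper : Periodic F (T • v)) (x : V) :
    HasLineDerivAt ℝ (linePrimitive T v F) (F x - lineAverage T v F x) x v := by
  set c : ℝ → E := fun s => F (x + s • v)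
  have hc : Continuous c := hF.comp (continuous_const.add (continuous_id.smul continuous_const))
  set Q : ℝ → E := fun u => ∫ t in 0..u, t • c t
  have hQ : ∀ u, HasDerivAt Q (u • c u) u := fun u =>
    ((continuous_id.smul hc).integral_hasStrictDerivAt 0 u).hasDerivAt
  -- After substituting `t = s + ε`, only the limits and the weight `t - ε` depend on `ε`, and by
  -- periodicity the integral of `c` over `[ε, ε + T]` does not.
  have key : ∀ ε : ℝ, linePrimitive T v F (x + ε • v)
      = T⁻¹ • (Q (ε + T) - Q ε) - ε • lineAverage T v F x := by
    intro ε
    have hshift : ∫ s in 0..T, s • F (x + ε • v + s • v)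
        = ∫ t in ε..ε + T, (t • c t - ε • c t) := by
      have := intervalIntegral.integral_comp_add_right (a := 0) (b := T)
        (fun t => t • c t - ε • c t) ε
      rw [zero_add, add_comm T] at this
      rw [← this]
      congr 1 with s
      simp only [c, add_sub_cancel_right, add_smul, add_assoc, add_comm (ε • v)]
    have hQdiff : ∫ t in ε..ε + T, t • c t = Q (ε + T) - Q ε :=
      (intervalIntegral.integral_interval_sub_left
        ((continuous_id.smul hc).intervalIntegrable _ _)
        ((continuous_id.smul hc).intervalIntegrable _ _)).symm
    have hperiod : ∫ t in ε..ε + T, c t = ∫ t in 0..T, c t := by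
      simpa using (hper.comp_add_smul x).intervalIntegral_add_eq ε 0
    rw [linePrimitive, lineAverage, hshift,
      intervalIntegral.integral_sub (f := fun t => t • c t) (g := fun t => ε • c t)
        ((continuous_id.smul hc).intervalIntegrable _ _) ((hc.const_smul ε).intervalIntegrable _ _),
      intervalIntegral.integral_smul, hQdiff, hperiod, smul_sub, smul_comm T⁻¹ ε]
  have hderiv : HasDerivAt (fun ε : ℝ => T⁻¹ • (Q (ε + T) - Q ε) - ε • lineAverage T v F x)
      (T⁻¹ • ((0 + T) • c (0 + T) - (0 : ℝ) • c 0) - (1 : ℝ) • lineAverage T v F x) 0 :=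
    ((((hQ (0 + T)).comp_add_const 0 T).sub (hQ 0)).const_smul T⁻¹).sub
      ((hasDerivAt_id 0).smul_const _)
  have hcT : c T = F x := by simpa [c] using hper x
  simp only [zero_add, zero_smul, sub_zero, one_smul, smul_smul, inv_mul_cancel₀ hT, hcT] at hderiv
  exact hderiv.congr_of_eventuallyEq (Filter.Eventually.of_forall key)

end LineAverage

section Box

variable {E : Type*} [NormedAddCommGroup E] [NormedSpace ℝ E]

theorem setIntegral_Icc_eq_integral_insertNth {m : ℕ} {H : (Fin (m + 1) → ℝ) → E}
    (ℓ : Fin (m + 1)) {a b : Fin (m + 1) → ℝ} (hH : IntegrableOn H (Icc a b)) :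
    ∫ x in Icc a b, H x =
      ∫ y in Icc (ℓ.removeNth a) (ℓ.removeNth b), ∫ t in Icc (a ℓ) (b ℓ), H (ℓ.insertNth t y) := by
  set e : ℝ × (Fin m → ℝ) ≃ᵐ (Fin (m + 1) → ℝ) :=
    (MeasurableEquiv.piFinSuccAbove (fun _ => ℝ) ℓ).symm
  have hem : MeasurePreserving e :=
    (volume_preserving_piFinSuccAbove (fun _ : Fin (m + 1) => ℝ) ℓ).symm _
  have he : e ⁻¹' Icc a b = Icc (a ℓ) (b ℓ) ×ˢ Icc (ℓ.removeNth a) (ℓ.removeNth b) :=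
    ((Fin.insertNthOrderIso (fun _ => ℝ) ℓ).preimage_Icc _ _).trans (Icc_prod_eq _ _)
  rw [← hem.map_eq, setIntegral_map_equiv, he, Measure.volume_eq_prod, ← Measure.prod_restrict,
    integral_prod_symm]
  · rfl
  · rw [Measure.prod_restrict, ← Measure.volume_eq_prod, ← he]
    exact (hem.integrableOn_comp_preimage e.measurableEmbedding).2 hH

theorem Fin.insertNth_add_smul_single {m : ℕ} (ℓ : Fin (m + 1)) (s c : ℝ) (y : Fin m → ℝ) :
    ℓ.insertNth s y + c • Pi.single ℓ 1 = ℓ.insertNth (s + c) y := by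
  ext j
  cases j using ℓ.succAboveCases <;> simp

theorem setIntegral_Icc_lineAverage [CompleteSpace E] {n : ℕ} {T : ℝ} {a b : Fin n → ℝ}
    {F : (Fin n → ℝ) → E} (ℓ : Fin n) (hT : 0 < T) (hab : b ℓ = a ℓ + T) (hF : Continuous F)
    (hper : Periodic F (T • Pi.single ℓ 1)) :
    ∫ x in Icc a b, lineAverage T (Pi.single ℓ 1) F x = ∫ x in Icc a b, F x := by
  obtain ⟨m, rfl⟩ := Nat.exists_eq_add_one.2 ℓ.pos
  have hAvg : Continuous (lineAverage T (Pi.single ℓ 1) F) :=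
    ((contDiff_zero (𝕜 := ℝ)).2 hF).lineAverage.continuous
  rw [setIntegral_Icc_eq_integral_insertNth ℓ hAvg.integrableOn_Icc,
    setIntegral_Icc_eq_integral_insertNth ℓ hF.integrableOn_Icc]
  congr 1 with y
  have hslice : ∀ t, lineAverage T (Pi.single ℓ 1) F (ℓ.insertNth t y)
      = lineAverage T (Pi.single ℓ 1) F (ℓ.insertNth (a ℓ) y) := fun t => by
    rw [← add_sub_cancel (a ℓ) t, ← Fin.insertNth_add_smul_single, lineAverage_periodic_smul hper]
  calc ∫ t in Icc (a ℓ) (b ℓ), lineAverage T (Pi.single ℓ 1) F (ℓ.insertNth t y)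
      = T • lineAverage T (Pi.single ℓ 1) F (ℓ.insertNth (a ℓ) y) := by
        simp only [hslice, setIntegral_const, Real.volume_real_Icc, hab, add_sub_cancel_left,
          max_eq_left hT.le]
    _ = ∫ s in 0..T, F (ℓ.insertNth (a ℓ + s) y) := by
        simp only [lineAverage, smul_smul, mul_inv_cancel₀ hT.ne', one_smul,
          Fin.insertNth_add_smul_single]
    _ = ∫ t in Icc (a ℓ) (b ℓ), F (ℓ.insertNth t y) := by
        rw [intervalIntegral.integral_comp_add_left (fun t => F (ℓ.insertNth t y)), add_zero, ← hab,
          intervalIntegral.integral_of_le (by linarith), integral_Icc_eq_integral_Ioc]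

end Box

theorem eq_of_forall_periodic_smul {R V α : Type*} [Semiring R] [AddCommGroup V] [Module R V]
    {F : V → α} {S : Set V} (hS : Submodule.span R S = ⊤)
    (hF : ∀ v ∈ S, ∀ c : R, Periodic F (c • v)) (x y : V) : F x = F y := by
  have hspan : ∀ w ∈ Submodule.span R S, ∀ c : R, Periodic F (c • w) := by
    intro w hw
    induction hw using Submodule.span_induction with
    | mem v hv => exact hF v hv
    | zero => simp [Periodic]
    | add u w _ _ hu hw => exact fun c => smul_add c u w ▸ (hu c).add_period (hw c)
    | smul d w _ hw => exact fun c => smul_smul c d w ▸ hw (c * d)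
  simpa using hspan (x - y) (hS ▸ Submodule.mem_top) 1 y

theorem Fin.sum_univ_castSucc_sub_succ {G : Type*} [AddCommGroup G] :
    ∀ {n : ℕ} (A : Fin (n + 1) → G), ∑ i : Fin n, (A i.castSucc - A i.succ) = A 0 - A (Fin.last n)
  | 0, A => by simp
  | n + 1, A => by
    rw [Fin.sum_univ_castSucc]
    simp only [Fin.succ_castSucc]
    rw [Fin.sum_univ_castSucc_sub_succ (fun i => A i.castSucc)]
    simp

section PartialAverage

variable {E : Type*} [NormedAddCommGroup E] [NormedSpace ℝ E] {n : ℕ} {T : ℝ}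
  {f : (Fin n → ℝ) → E}

noncomputable def partialAverage (T : ℝ) (f : (Fin n → ℝ) → E) :
    Fin (n + 1) → (Fin n → ℝ) → E :=
  Fin.induction f fun ℓ A => lineAverage T (Pi.single ℓ 1) A

@[simp]
theorem partialAverage_zero : partialAverage T f 0 = f := rfl

theorem partialAverage_succ (ℓ : Fin n) :
    partialAverage T f ℓ.succ = lineAverage T (Pi.single ℓ 1) (partialAverage T f ℓ.castSucc) :=
  rfl

theorem ContDiff.partialAverage {k : ℕ∞} (hf : ContDiff ℝ k f) (j : Fin (n + 1)) :
    ContDiff ℝ k (partialAverage T f j) := by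
  induction j using Fin.induction with
  | zero => exact hf
  | succ ℓ ih => exact ih.lineAverage

theorem Function.Periodic.partialAverage {w : Fin n → ℝ} (hf : Periodic f w) (j : Fin (n + 1)) :
    Periodic (partialAverage T f j) w := by
  induction j using Fin.induction with
  | zero => exact hf
  | succ ℓ ih => exact ih.lineAverage

theorem partialAverage_periodic_smul_single (hf : ∀ i, Periodic f (T • Pi.single i 1))
    {ℓ : Fin n} {j : Fin (n + 1)} (hℓj : ℓ.castSucc < j) (c : ℝ) :
    Periodic (partialAverage T f j) (c • Pi.single ℓ 1) := by
  induction j using Fin.induction with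
  | zero => exact absurd hℓj (Fin.not_lt_zero _)
  | succ i ih =>
    rw [partialAverage_succ]
    rcases (Fin.castSucc_lt_succ_iff.1 hℓj).lt_or_eq with hℓi | rfl
    · exact (ih (Fin.castSucc_lt_castSucc_iff.2 hℓi)).lineAverage
    · exact lineAverage_periodic_smul ((hf ℓ).partialAverage _) c

theorem partialAverage_last_apply_eq (hf : ∀ i, Periodic f (T • Pi.single i 1))
    (x y : Fin n → ℝ) : partialAverage T f (Fin.last n) x = partialAverage T f (Fin.last n) y := by
  refine eq_of_forall_periodic_smul (Pi.basisFun ℝ (Fin n)).span_eq ?_ x y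
  rintro _ ⟨ℓ, rfl⟩ c
  rw [Pi.basisFun_apply]
  exact partialAverage_periodic_smul_single hf (Fin.castSucc_lt_last ℓ) c

theorem setIntegral_Icc_partialAverage [CompleteSpace E] {a b : Fin n → ℝ} (hT : 0 < T)
    (hab : ∀ i, b i = a i + T) (hf : Continuous f) (hper : ∀ i, Periodic f (T • Pi.single i 1))
    (j : Fin (n + 1)) : ∫ x in Icc a b, partialAverage T f j x = ∫ x in Icc a b, f x := by
  induction j using Fin.induction with
  | zero => rfl
  | succ ℓ ih =>
    rw [partialAverage_succ, setIntegral_Icc_lineAverage ℓ hT (hab ℓ)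
      (((contDiff_zero (𝕜 := ℝ)).2 hf).partialAverage _).continuous ((hper ℓ).partialAverage _),
      ih]

theorem partialAverage_last_eq_setAverage [CompleteSpace E] {a b : Fin n → ℝ} (hT : 0 < T)
    (hab : ∀ i, b i = a i + T) (hf : Continuous f) (hper : ∀ i, Periodic f (T • Pi.single i 1))
    (x : Fin n → ℝ) : partialAverage T f (Fin.last n) x = ⨍ y in Icc a b, f y := by
  have hvol : volume (Icc a b) ≠ 0 := by simp [Real.volume_Icc_pi, hab, hT]
  calc partialAverage T f (Fin.last n) x
      = ⨍ _ in Icc a b, partialAverage T f (Fin.last n) x :=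
        (setAverage_const hvol isCompact_Icc.measure_lt_top.ne _).symm
    _ = ⨍ y in Icc a b, partialAverage T f (Fin.last n) y := by
        congr 1 with y
        exact partialAverage_last_apply_eq hper x y
    _ = ⨍ y in Icc a b, f y := by
        rw [setAverage_eq, setAverage_eq, setIntegral_Icc_partialAverage hT hab hf hper]

end PartialAverage

theorem periodic_mean_zero_eq_sum_derivs_general
    (n : ℕ) (f : (Fin n → ℝ) → ℂ)
    (hf_smooth : ContDiff ℝ (⊤ : ℕ∞) f)
    (hf_per : ∀ (x : Fin n → ℝ) (ℓ : Fin n), f (x + Pi.single ℓ (2 * π)) = f x)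
    (hf_int : ∫ x in Set.Icc (0 : Fin n → ℝ) (fun _ => 2 * π), f x = 0) :
    ∃ g : Fin n → (Fin n → ℝ) → ℂ,
      (∀ ℓ, ContDiff ℝ (⊤ : ℕ∞) (g ℓ)) ∧
      (∀ ℓ (x : Fin n → ℝ) (k : Fin n), g ℓ (x + Pi.single k (2 * π)) = g ℓ x) ∧
      (∀ x : Fin n → ℝ, f x = ∑ ℓ : Fin n, fderiv ℝ (g ℓ) x (Pi.single ℓ 1)) := by
  have hper : ∀ ℓ : Fin n, Periodic f ((2 * π) • Pi.single ℓ 1) := fun ℓ x => by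
    simpa [← Pi.single_smul'] using hf_per x ℓ
  have hlast : ∀ x, partialAverage (2 * π) f (Fin.last n) x = 0 := fun x => by
    rw [partialAverage_last_eq_setAverage (a := 0) (b := fun _ => 2 * π) two_pi_pos (by simp)
      hf_smooth.continuous hper, setAverage_eq, hf_int, smul_zero]
  set g : Fin n → (Fin n → ℝ) → ℂ :=
    fun ℓ => linePrimitive (2 * π) (Pi.single ℓ 1) (partialAverage (2 * π) f ℓ.castSucc)
  have hg_smooth : ∀ ℓ, ContDiff ℝ (⊤ : ℕ∞) (g ℓ) :=
    fun ℓ => (hf_smooth.partialAverage _).linePrimitive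
  have hg_deriv : ∀ ℓ x, fderiv ℝ (g ℓ) x (Pi.single ℓ 1)
      = partialAverage (2 * π) f ℓ.castSucc x - partialAverage (2 * π) f ℓ.succ x := by
    intro ℓ x
    rw [← ((hg_smooth ℓ).differentiable (by simp) x).lineDeriv_eq_fderiv,
      (hasLineDerivAt_linePrimitive two_pi_pos.ne' (hf_smooth.partialAverage _).continuous
        ((hper ℓ).partialAverage _) x).lineDeriv, partialAverage_succ]
  refine ⟨g, hg_smooth,
    fun ℓ x k => (Periodic.partialAverage (fun y => hf_per y k) _).linePrimitive x, fun x => ?_⟩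
  rw [Finset.sum_congr rfl fun ℓ _ => hg_deriv ℓ x,
    Fin.sum_univ_castSucc_sub_succ (fun j => partialAverage (2 * π) f j x), hlast, sub_zero,
    partialAverage_zero]

/-- Let `n ≥ 1` and let `f : ℝⁿ → ℂ` be smooth, `2π`-periodic in each variable,
with `∫_{[0,2π]^n} f(x) dx = 0`. Then there exist smooth `2π`-periodic functions
`g_1, …, g_n : ℝⁿ → ℂ` such that `f = Σ_{ℓ=1}^{n} ∂_{x_ℓ} g_ℓ`. -/
theorem periodic_mean_zero_eq_sum_derivs
    (n : ℕ) (hn : 1 ≤ n) (f : (Fin n → ℝ) → ℂ)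
    (hf_smooth : ContDiff ℝ (⊤ : ℕ∞) f)
    (hf_per : ∀ (x : Fin n → ℝ) (ℓ : Fin n), f (x + Pi.single ℓ (2 * π)) = f x)
    (hf_int : ∫ x in Set.Icc (0 : Fin n → ℝ) (fun _ => 2 * π), f x = 0) :
    ∃ g : Fin n → (Fin n → ℝ) → ℂ,
      (∀ ℓ, ContDiff ℝ (⊤ : ℕ∞) (g ℓ)) ∧
      (∀ ℓ (x : Fin n → ℝ) (k : Fin n), g ℓ (x + Pi.single k (2 * π)) = g ℓ x) ∧
      (∀ x : Fin n → ℝ, f x = ∑ ℓ : Fin n, fderiv ℝ (g ℓ) x (Pi.single ℓ 1)) :=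
  periodic_mean_zero_eq_sum_derivs_general n f hf_smooth hf_per hf_int
end
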